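/- Let p, k ∈ ℕ and d = (p+2)k + 1. Let s and t be parameter vectors in ℝ^d for single-hidden-layer logistic networks, s = (β₀^s,…,β_k^s, γ_{jh}^s) and t = (β₀^t,…,β_k^t, γ_{jh}^t), and let C ≥ 1 satisfy |β_j^s| ≤ C for j = 1,…,k. Then for every x ∈ [0,1]^p, |μ_t(x) − μ_s(x)| ≤ C · d · ‖t − s‖_∞, where ‖t − s‖_∞ = max_i |t_i − s_i|. -/
import Mathlib


open MeasureTheory ProbabilityTheory Real Filter
open scoped ENNReal Topology NNReal

noncomputable section

/-- Check (quantile-loss) function `ρ_τ(u) = u (τ − 1_{u<0})`. -/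
def checkFun (τ u : ℝ) : ℝ := u * (τ - if u < 0 then 1 else 0)

/-- Asymmetric Laplace density with location `μ`, scale `1`, skewness `τ`. -/
def ald (τ y μ : ℝ) : ℝ := τ * (1 - τ) * Real.exp (-(checkFun τ (y - μ)))

/-- The unit cube `[0,1]^p`. -/
def unitCube (p : ℕ) : Set (Fin p → ℝ) := Set.univ.pi fun _ => Set.Icc 0 1

/-- Number of parameters of a single-hidden-layer network with `p` inputs and `k` nodes. -/
def nnDim (p k : ℕ) : ℕ := (p + 2) * k + 1

/-- Index of the output weight `β_j` (`j = 0, …, k`) in the parameter vector. -/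
def betaIdx (p k : ℕ) (j : Fin (k + 1)) : Fin (nnDim p k) :=
  ⟨(j : ℕ), by
    have h1 : (j : ℕ) < k + 1 := j.isLt
    have h2 : k ≤ (p + 2) * k := Nat.le_mul_of_pos_left k (by omega)
    show (j : ℕ) < (p + 2) * k + 1
    linarith⟩

/-- Index of the input weight `γ_{j h}` (`j = 1, …, k`, `h = 0, …, p`) in the parameter
vector. -/
def gammaIdx (p k : ℕ) (j : Fin k) (h : Fin (p + 1)) : Fin (nnDim p k) :=
  ⟨1 + k + (j : ℕ) * (p + 1) + (h : ℕ), by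
    have hj : (j : ℕ) + 1 ≤ k := j.isLt
    have hh : (h : ℕ) + 1 ≤ p + 1 := h.isLt
    have hm : ((j : ℕ) + 1) * (p + 1) ≤ k * (p + 1) := Nat.mul_le_mul hj le_rfl
    show 1 + k + (j : ℕ) * (p + 1) + (h : ℕ) < (p + 2) * k + 1
    nlinarith⟩

/-- A single-hidden-layer logistic feedforward network with parameter vector `θ`:
`μ_θ(x) = β₀ + Σ_{j=1}^k β_j (1 + exp(−γ_{j0} − Σ_{h=1}^p γ_{jh} x_h))⁻¹`. -/
def nnFun (p k : ℕ) (θ : Fin (nnDim p k) → ℝ) (x : Fin p → ℝ) : ℝ :=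
  θ (betaIdx p k 0) + ∑ j : Fin k, θ (betaIdx p k j.succ) *
    (1 + Real.exp (-(θ (gammaIdx p k j 0) +
      ∑ h : Fin p, θ (gammaIdx p k j h.succ) * x h)))⁻¹

/-- The conditional model density `f_θ(x, ·)` of the network at parameter `θ`. -/
def modelDensFun (τ : ℝ) (p k : ℕ) (θ : Fin (nnDim p k) → ℝ) : (Fin p → ℝ) → ℝ → ℝ :=
  fun x y => ald τ y (nnFun p k θ x)

/-- The true joint density `f₀(x, y) = ald(y; μ₀(x))` (as a function of `x` and `y`). -/
def trueDensFun (τ : ℝ) (p : ℕ) (μ0 : (Fin p → ℝ) → ℝ) : (Fin p → ℝ) → ℝ → ℝ :=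
  fun x y => ald τ y (μ0 x)

/-- Hellinger distance between joint densities on `[0,1]^p × ℝ`. -/
def hellingerDist (p : ℕ) (f g : (Fin p → ℝ) → ℝ → ℝ) : ℝ :=
  Real.sqrt (∫ x in unitCube p, ∫ y : ℝ, (Real.sqrt (f x y) - Real.sqrt (g x y)) ^ 2)

/-- Kullback–Leibler divergence between joint densities on `[0,1]^p × ℝ`. -/
def klDist (p : ℕ) (f g : (Fin p → ℝ) → ℝ → ℝ) : ℝ :=
  ∫ x in unitCube p, ∫ y : ℝ, f x y * Real.log (f x y / g x y)

/-- The true joint distribution of `(X, Y)`: `X` uniform on `[0,1]^p` and, given `X = x`,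
`Y` with asymmetric Laplace density `ald(y; μ₀(x))`. -/
def trueMeasure (τ : ℝ) (p : ℕ) (μ0 : (Fin p → ℝ) → ℝ) : Measure ((Fin p → ℝ) × ℝ) :=
  ((volume.restrict (unitCube p)).prod volume).withDensity
    fun q => ENNReal.ofReal (ald τ q.2 (μ0 q.1))

/-- Likelihood of the first `n` data points under parameter `θ`. -/
def likProd (τ : ℝ) (p k : ℕ) (θ : Fin (nnDim p k) → ℝ)
    (data : ℕ → (Fin p → ℝ) × ℝ) (n : ℕ) : ℝ :=
  ∏ i ∈ Finset.range n, ald τ (data i).2 (nnFun p k θ (data i).1)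

/-- Likelihood ratio `R_n(θ)` of the model against the truth on the first `n` data points. -/
def likRatio (τ : ℝ) (p k : ℕ) (μ0 : (Fin p → ℝ) → ℝ) (θ : Fin (nnDim p k) → ℝ)
    (data : ℕ → (Fin p → ℝ) × ℝ) (n : ℕ) : ℝ :=
  ∏ i ∈ Finset.range n,
    ald τ (data i).2 (nnFun p k θ (data i).1) / ald τ (data i).2 (μ0 (data i).1)

/-- The `τ`-quantile of the probability density proportional to `g` on `ℝ`. -/
def densQuantile (τ : ℝ) (g : ℝ → ℝ) : ℝ :=
  sInf {m : ℝ | τ * ∫ y : ℝ, g y ≤ ∫ y in Set.Iic m, g y}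

/-- The product of `d` independent `N(0, σ₀²)` distributions on `ℝ^d`. -/
def gaussPrior (d : ℕ) (v : ℝ≥0) : Measure (Fin d → ℝ) :=
  Measure.pi fun _ => gaussianReal 0 v


/-- The logistic-type map `u ↦ (1 + exp u)⁻¹` is 1-Lipschitz. -/
lemma sig_lip (a b : ℝ) : |(1 + Real.exp a)⁻¹ - (1 + Real.exp b)⁻¹| ≤ |a - b| := by
  wlog hab : b ≤ a with H
  · rw [abs_sub_comm, abs_sub_comm a b]; exact H b a (le_of_not_ge hab)
  have ha : (0:ℝ) < 1 + Real.exp a := by positivity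
  have hb : (0:ℝ) < 1 + Real.exp b := by positivity
  have hmono : Real.exp b ≤ Real.exp a := Real.exp_le_exp.mpr hab
  have hle : (1 + Real.exp a)⁻¹ ≤ (1 + Real.exp b)⁻¹ := by
    apply inv_anti₀ hb; linarith
  rw [abs_of_nonpos (by linarith), abs_of_nonneg (by linarith)]
  have h1 : 1 + (b - a) ≤ Real.exp (b - a) := by linarith [Real.add_one_le_exp (b - a)]
  have h2 : Real.exp a - Real.exp b ≤ Real.exp a * (a - b) := by
    have h3 : Real.exp b = Real.exp a * Real.exp (b - a) := by
      rw [← Real.exp_add]; try ring_nf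
    nlinarith [Real.exp_pos a]
  have e1 : (1 + Real.exp b)⁻¹ - (1 + Real.exp a)⁻¹
      = (Real.exp a - Real.exp b) / ((1 + Real.exp b) * (1 + Real.exp a)) := by
    field_simp; try ring
  have : -((1 + Real.exp a)⁻¹ - (1 + Real.exp b)⁻¹)
      = (Real.exp a - Real.exp b) / ((1 + Real.exp b) * (1 + Real.exp a)) := by
    rw [← e1]; ring
  rw [this, div_le_iff₀ (by positivity)]
  nlinarith [Real.exp_pos a, Real.exp_pos b]

/-- Sup-norm Lipschitz bound for the network output in the parameters: if all output
weights `β_j^s` (`j = 1, …, k`) of `s` are bounded by `C ≥ 1`, then for every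
`x ∈ [0,1]^p`, `|μ_t(x) − μ_s(x)| ≤ C · d · ‖t − s‖_∞` with `d = (p+2)k + 1`. -/
theorem nn_lipschitz_in_parameters (p k : ℕ) (s t : Fin (nnDim p k) → ℝ) (C : ℝ)
    (hC : 1 ≤ C) (hbound : ∀ j : Fin k, |s (betaIdx p k j.succ)| ≤ C)
    (x : Fin p → ℝ) (hx : x ∈ unitCube p) :
    |nnFun p k t x - nnFun p k s x| ≤ C * (nnDim p k : ℝ) * ⨆ i, |t i - s i| := by
  classical
  set ε := ⨆ i, |t i - s i| with hεdef
  have hε : ∀ i, |t i - s i| ≤ ε := fun i =>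
    le_ciSup (f := fun i => |t i - s i|) (Set.Finite.bddAbove (Set.finite_range _)) i
  have hε0 : 0 ≤ ε := le_trans (abs_nonneg _) (hε (betaIdx p k 0))
  have hxh : ∀ h : Fin p, 0 ≤ x h ∧ x h ≤ 1 := by
    intro h
    have := hx h (Set.mem_univ h)
    exact ⟨this.1, this.2⟩
  -- per node bound
  have hnode : ∀ j : Fin k,
      |t (betaIdx p k j.succ) * (1 + Real.exp (-(t (gammaIdx p k j 0) +
          ∑ h : Fin p, t (gammaIdx p k j h.succ) * x h)))⁻¹
        - s (betaIdx p k j.succ) * (1 + Real.exp (-(s (gammaIdx p k j 0) +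
          ∑ h : Fin p, s (gammaIdx p k j h.succ) * x h)))⁻¹|
      ≤ ε + C * (((p : ℝ) + 1) * ε) := by
    intro j
    set A := t (gammaIdx p k j 0) + ∑ h : Fin p, t (gammaIdx p k j h.succ) * x h with hA
    set B := s (gammaIdx p k j 0) + ∑ h : Fin p, s (gammaIdx p k j h.succ) * x h with hB
    have hAB : |A - B| ≤ ((p : ℝ) + 1) * ε := by
      have hrw : A - B = (t (gammaIdx p k j 0) - s (gammaIdx p k j 0)) +
          ∑ h : Fin p, (t (gammaIdx p k j h.succ) - s (gammaIdx p k j h.succ)) * x h := by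
        simp only [sub_mul, Finset.sum_sub_distrib]
        ring
      rw [hrw]
      have hsum : |∑ h : Fin p, (t (gammaIdx p k j h.succ) - s (gammaIdx p k j h.succ)) * x h|
          ≤ (p : ℝ) * ε := by
        calc |∑ h : Fin p, (t (gammaIdx p k j h.succ) - s (gammaIdx p k j h.succ)) * x h|
            ≤ ∑ h : Fin p, |(t (gammaIdx p k j h.succ) - s (gammaIdx p k j h.succ)) * x h| :=
              Finset.abs_sum_le_sum_abs _ _
          _ ≤ ∑ _h : Fin p, ε := by
              apply Finset.sum_le_sum
              intro h _
              rw [abs_mul]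
              calc |t (gammaIdx p k j h.succ) - s (gammaIdx p k j h.succ)| * |x h|
                  ≤ ε * 1 := by
                    apply mul_le_mul (hε _) _ (abs_nonneg _) hε0
                    rw [abs_of_nonneg (hxh h).1]; exact (hxh h).2
                _ = ε := mul_one ε
          _ = (p : ℝ) * ε := by simp [mul_comm]
      calc |(t (gammaIdx p k j 0) - s (gammaIdx p k j 0)) + ∑ h : Fin p,
            (t (gammaIdx p k j h.succ) - s (gammaIdx p k j h.succ)) * x h|
          ≤ |t (gammaIdx p k j 0) - s (gammaIdx p k j 0)| + |∑ h : Fin p,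
            (t (gammaIdx p k j h.succ) - s (gammaIdx p k j h.succ)) * x h| := abs_add_le _ _
        _ ≤ ε + (p : ℝ) * ε := add_le_add (hε _) hsum
        _ = ((p : ℝ) + 1) * ε := by ring
    have hσlip : |(1 + Real.exp (-A))⁻¹ - (1 + Real.exp (-B))⁻¹| ≤ ((p : ℝ) + 1) * ε := by
      calc |(1 + Real.exp (-A))⁻¹ - (1 + Real.exp (-B))⁻¹| ≤ |(-A) - (-B)| := sig_lip _ _
        _ = |A - B| := by rw [abs_sub_comm]; ring_nf
        _ ≤ ((p : ℝ) + 1) * ε := hAB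
    have hσA : |(1 + Real.exp (-A))⁻¹| ≤ 1 := by
      rw [abs_of_nonneg (by positivity)]
      apply inv_le_one_of_one_le₀
      nlinarith [Real.exp_pos (-A)]
    have hsplit : t (betaIdx p k j.succ) * (1 + Real.exp (-A))⁻¹
        - s (betaIdx p k j.succ) * (1 + Real.exp (-B))⁻¹
        = (t (betaIdx p k j.succ) - s (betaIdx p k j.succ)) * (1 + Real.exp (-A))⁻¹
          + s (betaIdx p k j.succ) * ((1 + Real.exp (-A))⁻¹ - (1 + Real.exp (-B))⁻¹) := by
      ring
    rw [hsplit]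
    calc |(t (betaIdx p k j.succ) - s (betaIdx p k j.succ)) * (1 + Real.exp (-A))⁻¹
          + s (betaIdx p k j.succ) * ((1 + Real.exp (-A))⁻¹ - (1 + Real.exp (-B))⁻¹)|
        ≤ |(t (betaIdx p k j.succ) - s (betaIdx p k j.succ)) * (1 + Real.exp (-A))⁻¹|
          + |s (betaIdx p k j.succ) * ((1 + Real.exp (-A))⁻¹ - (1 + Real.exp (-B))⁻¹)| :=
          abs_add_le _ _
      _ = |t (betaIdx p k j.succ) - s (betaIdx p k j.succ)| * |(1 + Real.exp (-A))⁻¹|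
          + |s (betaIdx p k j.succ)| * |(1 + Real.exp (-A))⁻¹ - (1 + Real.exp (-B))⁻¹| := by
          rw [abs_mul, abs_mul]
      _ ≤ ε * 1 + C * (((p : ℝ) + 1) * ε) := by
          apply add_le_add
          · exact mul_le_mul (hε _) hσA (abs_nonneg _) hε0
          · exact mul_le_mul (hbound j) hσlip (abs_nonneg _) (by linarith)
      _ = ε + C * (((p : ℝ) + 1) * ε) := by ring
  -- assemble
  have hsplit : nnFun p k t x - nnFun p k s x
      = (t (betaIdx p k 0) - s (betaIdx p k 0)) +
        ∑ j : Fin k, (t (betaIdx p k j.succ) * (1 + Real.exp (-(t (gammaIdx p k j 0) +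
          ∑ h : Fin p, t (gammaIdx p k j h.succ) * x h)))⁻¹
          - s (betaIdx p k j.succ) * (1 + Real.exp (-(s (gammaIdx p k j 0) +
          ∑ h : Fin p, s (gammaIdx p k j h.succ) * x h)))⁻¹) := by
    rw [nnFun, nnFun, Finset.sum_sub_distrib]
    ring
  have hmain : |nnFun p k t x - nnFun p k s x|
      ≤ ε + (k : ℝ) * (ε + C * (((p : ℝ) + 1) * ε)) := by
    rw [hsplit]
    calc |(t (betaIdx p k 0) - s (betaIdx p k 0)) + ∑ j : Fin k, _|
        ≤ |t (betaIdx p k 0) - s (betaIdx p k 0)| + |∑ j : Fin k,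
          (t (betaIdx p k j.succ) * (1 + Real.exp (-(t (gammaIdx p k j 0) +
            ∑ h : Fin p, t (gammaIdx p k j h.succ) * x h)))⁻¹
            - s (betaIdx p k j.succ) * (1 + Real.exp (-(s (gammaIdx p k j 0) +
            ∑ h : Fin p, s (gammaIdx p k j h.succ) * x h)))⁻¹)| := abs_add_le _ _
      _ ≤ ε + (k : ℝ) * (ε + C * (((p : ℝ) + 1) * ε)) := by
          apply add_le_add (hε _)
          calc |∑ j : Fin k, _| ≤ ∑ j : Fin k, _ := Finset.abs_sum_le_sum_abs _ _
            _ ≤ ∑ _j : Fin k, (ε + C * (((p : ℝ) + 1) * ε)) :=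
                Finset.sum_le_sum (fun j _ => hnode j)
            _ = (k : ℝ) * (ε + C * (((p : ℝ) + 1) * ε)) := by
                simp [Finset.sum_const, Finset.card_univ, nsmul_eq_mul]; try ring
  have hd : ((nnDim p k : ℕ) : ℝ) = ((p : ℝ) + 2) * (k : ℝ) + 1 := by
    rw [nnDim]; push_cast; ring
  calc |nnFun p k t x - nnFun p k s x| ≤ ε + (k : ℝ) * (ε + C * (((p : ℝ) + 1) * ε)) := hmain
    _ ≤ C * (nnDim p k : ℝ) * ε := by
        rw [hd]
        have hk0 : (0:ℝ) ≤ (k : ℝ) := Nat.cast_nonneg k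
        have hp0 : (0:ℝ) ≤ (p : ℝ) := Nat.cast_nonneg p
        nlinarith [mul_nonneg hk0 hε0, mul_nonneg (mul_nonneg hk0 hp0) hε0]

end
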